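/- arXiv:math/0207194 — 5 statements merged into one kernel-verified Lean document; each statement's English description precedes it below -/
import Mathlib

section
/- Let G be a finite group acting by ring automorphisms on a commutative ring A, let m ⊆ A be a G-invariant ideal, and let H ⊆ G be a subgroup such that the index [G:H] (i.e. the image of the integer [G:H] in A) is a unit of A. Then η_G(m) ≤ [G:H]·η_H(m). -/
/-- The ideal generated by the `H`-invariant elements of a (`G`-invariant) ideal `m`,
where `H` is a subgroup of `G` acting on `A`. -/
def invIdeal {G A : Type*} [Group G] [CommRing A] [MulSemiringAction G A]
    (H : Subgroup G) (m : Ideal A) : Ideal A :=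
  Ideal.span {a : A | a ∈ m ∧ ∀ g ∈ H, g • a = a}

/-- `η_H(m) = inf { d : m ^ d ⊆ ⟨m^H⟩ }`, as an element of `ℕ ∪ {∞}`. -/
noncomputable def eta {G A : Type*} [Group G] [CommRing A] [MulSemiringAction G A]
    (H : Subgroup G) (m : Ideal A) : ℕ∞ :=
  sInf ((↑) '' {d : ℕ | m ^ d ≤ invIdeal H m})

section Aux

open Finset

variable {G A : Type*} [Group G] [Finite G] [CommRing A] [MulSemiringAction G A]
variable {H : Subgroup G} {m : Ideal A}

variable [Fintype (G ⧸ H)]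

lemma toRingHom_smul_apply (g : G) (a : A) :
    MulSemiringAction.toRingHom G A g a = g • a := rfl

/-- For an `H`-invariant element, the action of `k : G` only depends on the coset `kH`. -/
lemma smul_eq_of_coset_eq {y : A} (hy : ∀ g ∈ H, g • y = y) {k₁ k₂ : G}
    (h : (k₁ : G ⧸ H) = (k₂ : G ⧸ H)) : k₁ • y = k₂ • y := by
  have hmem : k₁⁻¹ * k₂ ∈ H := QuotientGroup.eq.mp h
  conv_rhs => rw [show k₂ = k₁ * (k₁⁻¹ * k₂) by group]
  rw [mul_smul, hy _ hmem]

/-- The relative trace of an (`H`-invariant) element. -/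
noncomputable def relTr (H : Subgroup G) [Fintype (G ⧸ H)] (y : A) : A :=
  ∑ q : G ⧸ H, Quotient.out q • y

lemma relTr_mem (hm : ∀ (g : G), ∀ a ∈ m, g • a ∈ m) {y : A} (hy : y ∈ m) :
    relTr H y ∈ m :=
  Ideal.sum_mem _ fun q _ => hm _ _ hy

lemma relTr_invariant {y : A} (hy : ∀ g ∈ H, g • y = y) (g : G) :
    g • relTr H y = relTr H y := by
  unfold relTr
  rw [Finset.smul_sum]
  have h1 : ∀ q : G ⧸ H, g • (Quotient.out q • y) = Quotient.out (g • q) • y := by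
    intro q
    rw [← mul_smul]
    refine smul_eq_of_coset_eq hy ?_
    calc (↑(g * Quotient.out q) : G ⧸ H) = g • (↑(Quotient.out q) : G ⧸ H) := rfl
      _ = g • q := by rw [QuotientGroup.out_eq']
      _ = ↑(Quotient.out (g • q)) := (QuotientGroup.out_eq' _).symm
  calc ∑ q : G ⧸ H, g • (Quotient.out q • y)
      = ∑ q : G ⧸ H, Quotient.out (g • q) • y := by simp_rw [h1]
    _ = ∑ q : G ⧸ H, Quotient.out q • y :=
        Fintype.sum_bijective (g • ·) (MulAction.bijective g)
          _ _ (fun q => rfl)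

lemma relTr_mem_invIdeal_top (hm : ∀ (g : G), ∀ a ∈ m, g • a ∈ m) {y : A}
    (hy : y ∈ m) (hinv : ∀ g ∈ H, g • y = y) :
    relTr H y ∈ invIdeal (⊤ : Subgroup G) m :=
  Ideal.subset_span ⟨relTr_mem hm hy, fun g _ => relTr_invariant hinv g⟩

/-- The key identity: if `n = [G:H]` then
`n • ∏_{c ∈ G/H} c•u_c = ∑_{∅≠S⊆G/H} (-1)^{|S|-1} Tr(∏_{c∈S} u_c) ∏_{c∉S} c•u_c`,
hence the product lies in `⟨m^G⟩` whenever `n` is invertible. -/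
private lemma prod_neg_aux {t : Finset (G ⧸ H)} {f : G ⧸ H → A} :
    ∏ i ∈ t, -f i = (-1 : A) ^ t.card * ∏ i ∈ t, f i := by
  classical
  induction t using Finset.induction_on with
  | empty => simp
  | @insert a s ha ih =>
      rw [Finset.prod_insert ha, Finset.prod_insert ha, ih,
        Finset.card_insert_of_notMem ha, pow_succ]
      ring

lemma key_prod_mem (hm : ∀ (g : G), ∀ a ∈ m, g • a ∈ m)
    (hunit : IsUnit ((H.index : A))) (u : G ⧸ H → A)
    (hu : ∀ q, u q ∈ m ∧ ∀ g ∈ H, g • u q = u q) :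
    (∏ q : G ⧸ H, Quotient.out q • u q) ∈ invIdeal (⊤ : Subgroup G) m := by
  classical
  obtain ⟨T, hT⟩ : ∃ T : A, T = ∏ q : G ⧸ H, Quotient.out q • u q := ⟨_, rfl⟩
  rw [← hT]
  -- for each coset q', the product of differences vanishes
  have h0 : ∀ q' : G ⧸ H, (0 : A) = ∑ t ∈ (univ : Finset (G ⧸ H)).powerset,
      ((-1 : A) ^ t.card * (Quotient.out q' • ∏ q ∈ t, u q)) *
        ∏ q ∈ univ \ t, Quotient.out q • u q := by
    intro q'
    have := Finset.prod_add (fun q : G ⧸ H => -(Quotient.out q' • u q))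
      (fun q : G ⧸ H => Quotient.out q • u q) univ
    have hz : ∏ q : G ⧸ H, (-(Quotient.out q' • u q) + Quotient.out q • u q) = 0 :=
      Finset.prod_eq_zero (mem_univ q') (by rw [neg_add_cancel])
    rw [hz] at this
    rw [this]
    refine Finset.sum_congr rfl fun t _ => ?_
    congr 1
    rw [prod_neg_aux]
    congr 1
    have := (map_prod (MulSemiringAction.toRingHom G A (Quotient.out q')) u t).symm
    simpa only [toRingHom_smul_apply] using this
  -- sum over q' and swap sums
  have h1 : (0 : A) = ∑ t ∈ (univ : Finset (G ⧸ H)).powerset,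
      ((-1 : A) ^ t.card * relTr H (∏ q ∈ t, u q)) *
        ∏ q ∈ univ \ t, Quotient.out q • u q := by
    calc (0 : A) = ∑ _q' : G ⧸ H, (0 : A) := by simp
      _ = ∑ q' : G ⧸ H, ∑ t ∈ (univ : Finset (G ⧸ H)).powerset,
            ((-1 : A) ^ t.card * (Quotient.out q' • ∏ q ∈ t, u q)) *
              ∏ q ∈ univ \ t, Quotient.out q • u q := by
          refine Finset.sum_congr rfl fun q' _ => h0 q'
      _ = ∑ t ∈ (univ : Finset (G ⧸ H)).powerset, ∑ q' : G ⧸ H,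
            ((-1 : A) ^ t.card * (Quotient.out q' • ∏ q ∈ t, u q)) *
              ∏ q ∈ univ \ t, Quotient.out q • u q := Finset.sum_comm
      _ = _ := by
          refine Finset.sum_congr rfl fun t _ => ?_
          rw [relTr]
          conv_rhs => rw [Finset.mul_sum, Finset.sum_mul]
  -- extract the `t = ∅` term
  have hmem0 : (∅ : Finset (G ⧸ H)) ∈ (univ : Finset (G ⧸ H)).powerset := by
    simp
  rw [← Finset.add_sum_erase _ (fun t => ((-1 : A) ^ t.card * relTr H (∏ q ∈ t, u q)) *
        ∏ q ∈ univ \ t, Quotient.out q • u q) hmem0] at h1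
  have hempty : ((-1 : A) ^ (∅ : Finset (G ⧸ H)).card *
      relTr H (∏ q ∈ (∅ : Finset (G ⧸ H)), u q)) *
        ∏ q ∈ univ \ (∅ : Finset (G ⧸ H)), Quotient.out q • u q
      = (H.index : A) * T := by
    rw [Finset.card_empty, pow_zero, Finset.prod_empty, Finset.sdiff_empty, one_mul]
    have h3 : relTr H (1 : A) = (H.index : A) := by
      rw [relTr]
      simp [Finset.card_univ, Subgroup.index_eq_card, Nat.card_eq_fintype_card]
    rw [h3, hT]
  rw [hempty] at h1
  -- hence `(H.index : A) * T` is in the ideal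
  have hrest : ∀ t ∈ ((univ : Finset (G ⧸ H)).powerset.erase ∅),
      ((-1 : A) ^ t.card * relTr H (∏ q ∈ t, u q)) *
        (∏ q ∈ univ \ t, Quotient.out q • u q) ∈ invIdeal (⊤ : Subgroup G) m := by
    intro t ht
    obtain ⟨q₀, hq₀⟩ : t.Nonempty := Finset.nonempty_of_ne_empty (Finset.mem_erase.mp ht).1
    have hvmem : (∏ q ∈ t, u q) ∈ m := by
      rw [← Finset.mul_prod_erase t _ hq₀]
      exact Ideal.mul_mem_right _ _ (hu q₀).1
    have hvinv : ∀ g ∈ H, g • (∏ q ∈ t, u q) = ∏ q ∈ t, u q := by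
      intro g hg
      calc g • ∏ q ∈ t, u q = ∏ q ∈ t, g • u q := by
            have := map_prod (MulSemiringAction.toRingHom G A g) u t
            simpa only [toRingHom_smul_apply] using this
        _ = ∏ q ∈ t, u q := Finset.prod_congr rfl fun q _ => (hu q).2 g hg
    exact Ideal.mul_mem_right _ _ (Ideal.mul_mem_left _ _
      (relTr_mem_invIdeal_top hm hvmem hvinv))
  have hIT : (H.index : A) * T ∈ invIdeal (⊤ : Subgroup G) m := by
    have h2 : (H.index : A) * T = -∑ t ∈ ((univ : Finset (G ⧸ H)).powerset.erase ∅),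
        ((-1 : A) ^ t.card * relTr H (∏ q ∈ t, u q)) *
          ∏ q ∈ univ \ t, Quotient.out q • u q :=
      eq_neg_of_add_eq_zero_left h1.symm
    have h4 : -(∑ t ∈ ((univ : Finset (G ⧸ H)).powerset.erase ∅),
        ((-1 : A) ^ t.card * relTr H (∏ q ∈ t, u q)) *
          ∏ q ∈ univ \ t, Quotient.out q • u q) ∈ invIdeal (⊤ : Subgroup G) m :=
      neg_mem (Ideal.sum_mem _ hrest)
    rwa [← h2] at h4
  -- divide by the unit
  have h5 : (↑hunit.unit⁻¹ : A) * (H.index : A) = 1 := by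
    have h6 := Units.inv_mul hunit.unit
    rwa [IsUnit.unit_spec] at h6
  have hTfinal : T = (↑hunit.unit⁻¹ : A) * ((H.index : A) * T) := by
    rw [← mul_assoc, h5, one_mul]
  rw [hTfinal]
  exact Ideal.mul_mem_left _ _ hIT

/-- `G`-stability of powers of `m`. -/
lemma smul_mem_pow (hm : ∀ (g : G), ∀ a ∈ m, g • a ∈ m) (d : ℕ) (g : G) {x : A}
    (hx : x ∈ m ^ d) : g • x ∈ m ^ d := by
  have hmap : Ideal.map (MulSemiringAction.toRingHom G A g) m ≤ m := by
    rw [Ideal.map_le_iff_le_comap]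
    intro a ha
    exact hm g a ha
  have h1 : (MulSemiringAction.toRingHom G A g) x ∈
      Ideal.map (MulSemiringAction.toRingHom G A g) (m ^ d) :=
    Ideal.mem_map_of_mem _ hx
  rw [Ideal.map_pow] at h1
  exact Ideal.pow_right_mono hmap d h1

/-- Main ideal-theoretic lemma: if `m^d ⊆ ⟨m^H⟩` and `[G:H]` is invertible, then
`m^([G:H]·d) ⊆ ⟨m^G⟩`. -/
lemma main_pow_le (hm : ∀ (g : G), ∀ a ∈ m, g • a ∈ m)
    (hunit : IsUnit ((H.index : A))) {d : ℕ} (hd : m ^ d ≤ invIdeal H m) :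
    m ^ (H.index * d) ≤ invIdeal (⊤ : Subgroup G) m := by
  classical
  set S : Set A := {a : A | a ∈ m ∧ ∀ g ∈ H, g • a = a} with hS
  set Sq : G ⧸ H → Set A := fun q => (fun a => Quotient.out q • a) '' S with hSq
  set J : G ⧸ H → Ideal A := fun q => Ideal.span (Sq q) with hJ
  -- m^d ≤ J q for each q
  have hle : ∀ q : G ⧸ H, m ^ d ≤ J q := by
    intro q x hx
    have h1 : (Quotient.out q)⁻¹ • x ∈ invIdeal H m := hd (smul_mem_pow hm d _ hx)
    have h2 : Quotient.out q • ((Quotient.out q)⁻¹ • x) ∈ J q := by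
      have : (MulSemiringAction.toRingHom G A (Quotient.out q))
          ((Quotient.out q)⁻¹ • x) ∈
          Ideal.map (MulSemiringAction.toRingHom G A (Quotient.out q))
            (invIdeal H m) := Ideal.mem_map_of_mem _ h1
      rwa [invIdeal, Ideal.map_span] at this
    rwa [smul_inv_smul] at h2
  -- product of the J q's
  have hprodmono : ∀ s : Finset (G ⧸ H), (∏ q ∈ s, m ^ d) ≤ ∏ q ∈ s, J q := by
    intro s
    induction s using Finset.induction_on with
    | empty => simp
    | @insert a s ha ih =>
        rw [Finset.prod_insert ha, Finset.prod_insert ha]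
        exact Ideal.mul_mono (hle a) ih
  have hspan : (∏ q : G ⧸ H, J q) ≤ invIdeal (⊤ : Subgroup G) m := by
    rw [hJ]
    rw [Ideal.prod_span]
    rw [Ideal.span_le]
    intro a ha
    rw [Set.mem_finset_prod] at ha
    obtain ⟨gf, hgf, hprod⟩ := ha
    choose v hv1 hv2 using fun q => (hgf (Finset.mem_univ q) : gf q ∈ Sq q)
    have : a = ∏ q : G ⧸ H, Quotient.out q • v q := by
      rw [← hprod]
      exact Finset.prod_congr rfl fun q _ => (hv2 q).symm
    rw [this]
    exact key_prod_mem hm hunit v (fun q => hv1 q)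
  calc m ^ (H.index * d) = (m ^ d) ^ H.index := by rw [← pow_mul, mul_comm]
    _ = ∏ _q : G ⧸ H, m ^ d := by
        rw [Finset.prod_const, Finset.card_univ, Subgroup.index_eq_card,
          Nat.card_eq_fintype_card]
    _ ≤ ∏ q : G ⧸ H, J q := hprodmono _
    _ ≤ invIdeal (⊤ : Subgroup G) m := hspan

end Aux

/-- If `G` is a finite group acting by ring automorphisms on a
commutative ring `A`, `m` is a `G`-invariant ideal, and `H ⊆ G` is a subgroup whose
index is invertible in `A`, then `η_G(m) ≤ [G:H] ⬝ η_H(m)`. -/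
theorem eta_le_index_mul_eta {G A : Type} [Group G] [Finite G] [CommRing A]
    [MulSemiringAction G A] (m : Ideal A) (hm : ∀ (g : G), ∀ a ∈ m, g • a ∈ m)
    (H : Subgroup G) (hunit : IsUnit ((H.index : A))) :
    eta (⊤ : Subgroup G) m ≤ (H.index : ℕ∞) * eta H m := by
  classical
  haveI : Fintype (G ⧸ H) := Fintype.ofFinite _
  set S : Set ℕ := {d : ℕ | m ^ d ≤ invIdeal H m} with hSdef
  by_cases hS : S.Nonempty
  · have d₀mem : sInf S ∈ S := Nat.sInf_mem hS
    set d₀ := sInf S with hd₀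
    have hmain : m ^ (H.index * d₀) ≤ invIdeal (⊤ : Subgroup G) m :=
      main_pow_le hm hunit d₀mem
    have h1 : eta (⊤ : Subgroup G) m ≤ ((H.index * d₀ : ℕ) : ℕ∞) := by
      apply sInf_le
      exact ⟨H.index * d₀, hmain, rfl⟩
    have h2 : (d₀ : ℕ∞) ≤ eta H m := by
      apply le_sInf
      rintro b ⟨e, he, rfl⟩
      exact_mod_cast Nat.sInf_le he
    calc eta (⊤ : Subgroup G) m ≤ ((H.index * d₀ : ℕ) : ℕ∞) := h1
      _ = (H.index : ℕ∞) * (d₀ : ℕ∞) := by push_cast; ring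
      _ ≤ (H.index : ℕ∞) * eta H m := mul_le_mul_right h2 _
  · have himg : ((↑) '' S : Set ℕ∞) = ∅ := by
      rw [Set.image_eq_empty]
      exact Set.not_nonempty_iff_eq_empty.mp hS
    have hetaH : eta H m = ⊤ := by
      rw [eta, ← hSdef, himg, sInf_empty]
    rw [hetaH]
    have hne : (H.index : ℕ∞) ≠ 0 := by
      exact_mod_cast Subgroup.index_ne_zero_of_finite
    rw [ENat.mul_top hne]
    exact le_top
end

section
/- Let A = ⊕_{d≥0} A_d be a commutative ℕ-graded ring with an action of a finite group G by degree-preserving ring automorphisms, such that β(A) ≤ 1 and |G| is a unit of A. Then β(A^G) ≤ |G| (Noether's bound, the Fleischmann–Fogarty theorem). -/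
/-- For a family `𝒜` of "graded pieces" of `A` and a subring `B` of `A` which is graded
with respect to `𝒜`, `beta 𝒜 B = inf {n : B is generated as a ring by its elements
lying in some `𝒜 d` with `d ≤ n`}`, as an element of `ℕ ∪ {∞}`. -/
noncomputable def beta {A : Type*} [CommRing A] (𝒜 : ℕ → Set A) (B : Subring A) : ℕ∞ :=
  sInf ((↑) '' {n : ℕ | B ≤ Subring.closure {a : A | a ∈ B ∧ ∃ d ≤ n, a ∈ 𝒜 d}})

/-- The subring `A^G` of `G`-invariant elements. -/
def fixedSubring (G A : Type*) [Group G] [CommRing A] [MulSemiringAction G A] : Subring A where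
  carrier := {a : A | ∀ g : G, g • a = a}
  mul_mem' := by intro a b ha hb; intro g; rw [smul_mul', ha g, hb g]
  one_mem' := fun g => smul_one g
  add_mem' := by intro a b ha hb; intro g; rw [smul_add, ha g, hb g]
  zero_mem' := fun g => smul_zero g
  neg_mem' := by intro a ha g; rw [smul_neg, ha g]

/-!
Fogarty's argument. Let `τ x = ∑ g, g • x` be the transfer and `C` the subring generated by the
invariants of degree `≤ |G|`. As `|G|⁻¹` is an invariant of degree `0`, every invariant `x` equals
`|G|⁻¹ * τ x`, so it suffices that `τ (a₁ ⋯ aₖ) ∈ C` whenever all `aᵢ` have degree `≤ 1`. For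
`k ≤ |G|` this holds by degree. For `k > |G|`, index the first `|G|` factors by `G` and write `b`
for the product of the others: applying `τ` to `∑ h, (∏ g, (h • a g - g⁻¹ • a g)) * h • b = 0`
expresses `|G| * τ ((∏ g, a g) * b)` through the products
`τ (∏ g ∉ t, -(g⁻¹ • a g)) * τ ((∏ g ∈ t, a g) * b)` with `t ≠ G`, whose first factor has degree
`≤ |G|` and whose second factor is the transfer of a shorter product.
-/

open Finset

theorem beta_le_coe_iff {A : Type*} [CommRing A] {𝒜 : ℕ → Set A} {B : Subring A} {n : ℕ} :
    beta 𝒜 B ≤ n ↔ B ≤ Subring.closure {a | a ∈ B ∧ ∃ d ≤ n, a ∈ 𝒜 d} := by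
  refine ⟨fun h => ?_, fun h => sInf_le ⟨n, h, rfl⟩⟩
  obtain ⟨_, ⟨m, hm, rfl⟩, hmn⟩ :=
    sInf_lt_iff.1 (h.trans_lt (ENat.natCast_lt_natCast.2 n.lt_succ_self))
  refine hm.trans (Subring.closure_mono ?_)
  rintro a ⟨ha, d, hd, had⟩
  exact ⟨ha, d, hd.trans (Nat.lt_succ_iff.1 (ENat.natCast_lt_natCast.1 hmn)), had⟩

namespace MulSemiringAction

section Transfer

variable {G A : Type*} [Group G] [CommRing A] [MulSemiringAction G A]

theorem smul_eq_self_of_mul_eq_one {u c : A} (hc : ∀ g : G, g • c = c) (h : u * c = 1)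
    (g : G) : g • u = u :=
  left_inv_eq_right_inv (by rw [← hc g, ← smul_mul', h, smul_one]) (mul_comm u c ▸ h)

variable [Fintype G]

variable (G) in
def transfer : A →+ A where
  toFun x := ∑ g : G, g • x
  map_zero' := by simp
  map_add' x y := by simp [smul_add, sum_add_distrib]

theorem transfer_apply (x : A) : transfer G x = ∑ g : G, g • x := rfl

theorem smul_transfer (h : G) (x : A) : h • transfer G x = transfer G x := by
  rw [transfer_apply, smul_sum]
  exact Fintype.sum_equiv (Equiv.mulLeft h) _ _ fun g => smul_smul h g x

theorem transfer_mul_of_smul_eq {c : A} (hc : ∀ g : G, g • c = c) (x : A) :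
    transfer G (x * c) = transfer G x * c := by
  simp only [transfer_apply, sum_mul, smul_mul', hc]

theorem transfer_mul_transfer (x y : A) :
    transfer G (x * transfer G y) = transfer G x * transfer G y :=
  transfer_mul_of_smul_eq (smul_transfer · y) x

theorem transfer_of_smul_eq {x : A} (hx : ∀ g : G, g • x = x) :
    transfer G x = Fintype.card G * x := by
  simp [transfer_apply, hx]

theorem transfer_one : transfer G (1 : A) = Fintype.card G := by
  simp [transfer_apply]

-- The factor `g = h⁻¹` of `∏ g, (h • a g - g⁻¹ • a g)` vanishes.
theorem sum_powerset_prod_neg_smul_mul_transfer_eq_zero [DecidableEq G] (a : G → A) (b : A) :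
    ∑ t ∈ (univ : Finset G).powerset,
      (∏ g ∈ univ \ t, -(g⁻¹ • a g)) * transfer G ((∏ g ∈ t, a g) * b) = 0 := by
  have hvanish (h : G) : (∏ g, (h • a g + -(g⁻¹ • a g))) * h • b = 0 := by
    rw [prod_eq_zero (mem_univ h⁻¹) (by rw [inv_inv, add_neg_cancel]), zero_mul]
  calc _ = ∑ h : G, (∏ g, (h • a g + -(g⁻¹ • a g))) * h • b := by
        simp only [prod_add, sum_mul, transfer_apply, mul_sum, smul_mul', smul_prod']
        rw [sum_comm]
        refine sum_congr rfl fun h _ => sum_congr rfl fun t _ => by ring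
    _ = 0 := sum_eq_zero fun h _ => hvanish h

theorem transfer_prod_mul_mem [DecidableEq G] {C : Subring A} {u : A}
    (hu : u * Fintype.card G = 1) (huC : u ∈ C) (a : G → A) (b : A)
    (hleft : ∀ t ≠ univ, transfer G (∏ g ∈ univ \ t, -(g⁻¹ • a g)) ∈ C)
    (hright : ∀ t ≠ univ, transfer G ((∏ g ∈ t, a g) * b) ∈ C) :
    transfer G ((∏ g, a g) * b) ∈ C := by
  have key := congrArg (transfer G) (sum_powerset_prod_neg_smul_mul_transfer_eq_zero a b)
  rw [map_sum, map_zero, ← add_sum_erase _ _ (mem_powerset_self univ)] at key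
  simp only [transfer_mul_transfer, sdiff_self, bot_eq_empty, prod_empty, transfer_one] at key
  rw [← one_mul (transfer G _), ← hu, mul_assoc, eq_neg_of_add_eq_zero_left key]
  refine C.mul_mem huC (C.neg_mem (C.sum_mem fun t ht => C.mul_mem ?_ ?_))
  · exact hleft t (mem_erase.1 ht).1
  · exact hright t (mem_erase.1 ht).1

end Transfer
end MulSemiringAction

open MulSemiringAction

section Graded

variable {A : Type*} [CommRing A] (𝒜 : ℕ → AddSubgroup A)

theorem exists_list_prod_mem_of_le_one [SetLike.GradedMonoid 𝒜] {L : List A}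
    (hL : ∀ x ∈ L, ∃ d ≤ 1, x ∈ 𝒜 d) : ∃ d ≤ L.length, L.prod ∈ 𝒜 d := by
  induction L with
  | nil => exact ⟨0, le_rfl, SetLike.one_mem_graded 𝒜⟩
  | cons x L ih =>
    obtain ⟨e, he, hx⟩ := hL x List.mem_cons_self
    obtain ⟨d, hd, hLd⟩ := ih fun y hy => hL y (List.mem_cons_of_mem x hy)
    exact ⟨e + d, by simp only [List.length_cons]; omega, SetLike.mul_mem_graded hx hLd⟩

theorem mem_zero_of_mul_eq_one [GradedRing 𝒜] {u c : A} (hc : c ∈ 𝒜 0) (h : u * c = 1) :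
    u ∈ 𝒜 0 := by
  have hc₀ : c * (DirectSum.decompose 𝒜 u 0 : A) = 1 := by
    rw [← DirectSum.coe_decompose_mul_of_left_mem_zero 𝒜 hc, mul_comm c, h,
      DirectSum.decompose_of_mem_same 𝒜 (SetLike.one_mem_graded 𝒜)]
  have hu : u = DirectSum.decompose 𝒜 u 0 := calc
    u = u * (c * DirectSum.decompose 𝒜 u 0) := by rw [hc₀, mul_one]
    _ = DirectSum.decompose 𝒜 u 0 := by rw [← mul_assoc, h, one_mul]
  exact hu ▸ SetLike.coe_mem _

end Graded

section Invariants

variable (G : Type*) {A : Type*} [Group G] [CommRing A] [MulSemiringAction G A]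
  (𝒜 : ℕ → AddSubgroup A)

def closureFixedDegLE (n : ℕ) : Subring A :=
  Subring.closure {a | a ∈ fixedSubring G A ∧ ∃ d ≤ n, a ∈ (𝒜 d : Set A)}

variable {G 𝒜} [Fintype G]

theorem transfer_mem_closureFixedDegLE (hdeg : ∀ (g : G) (d : ℕ), ∀ a ∈ 𝒜 d, g • a ∈ 𝒜 d)
    {x : A} {d n : ℕ} (hx : x ∈ 𝒜 d) (hd : d ≤ n) : transfer G x ∈ closureFixedDegLE G 𝒜 n :=
  Subring.subset_closure ⟨(smul_transfer · x), d, hd, sum_mem fun g _ => hdeg g d x hx⟩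

theorem transfer_list_prod_mem [GradedRing 𝒜] (hdeg : ∀ (g : G) (d : ℕ), ∀ a ∈ 𝒜 d, g • a ∈ 𝒜 d)
    {u : A} (hu : u * Fintype.card G = 1) (huC : u ∈ closureFixedDegLE G 𝒜 (Fintype.card G))
    (L : List A) (hL : ∀ x ∈ L, ∃ d ≤ 1, x ∈ 𝒜 d) :
    transfer G L.prod ∈ closureFixedDegLE G 𝒜 (Fintype.card G) := by
  classical
  induction hk : L.length using Nat.strong_induction_on generalizing L with
  | _ k ih =>
  by_cases hshort : L.length ≤ Fintype.card G
  · obtain ⟨d, hd, hLd⟩ := exists_list_prod_mem_of_le_one 𝒜 hL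
    exact transfer_mem_closureFixedDegLE hdeg hLd (hd.trans hshort)
  obtain ⟨L₁, L₂, rfl, hL₁⟩ : ∃ L₁ L₂, L = L₁ ++ L₂ ∧ L₁.length = Fintype.card G :=
    ⟨L.take _, L.drop _, (L.take_append_drop _).symm, L.length_take_of_le (by omega)⟩
  let e : G ≃ Fin L₁.length := Fintype.equivFinOfCardEq hL₁.symm
  set a : G → A := fun g => L₁[e g]
  have ha g : ∃ d ≤ 1, a g ∈ 𝒜 d := hL _ (List.mem_append_left _ (List.getElem_mem _))
  have hprod : ∏ g, a g = L₁.prod := (e.prod_comp fun i => L₁[i]).trans (Fin.prod_univ_getElem L₁)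
  rw [List.prod_append, ← hprod]
  refine transfer_prod_mul_mem hu huC a L₂.prod (fun t _ => ?_) (fun t ht => ?_)
  · rw [← prod_map_toList]
    obtain ⟨d, hd, hmem⟩ := exists_list_prod_mem_of_le_one 𝒜 (L := (univ \ t).toList.map _) (by
      simp only [List.mem_map, mem_toList]
      rintro _ ⟨g, -, rfl⟩
      obtain ⟨d, hd, hg⟩ := ha g
      exact ⟨d, hd, neg_mem (hdeg g⁻¹ d _ hg)⟩)
    refine transfer_mem_closureFixedDegLE hdeg hmem (hd.trans ?_)
    simpa using card_le_univ (univ \ t)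
  · rw [← prod_map_toList, ← List.prod_append]
    refine ih _ ?_ _ ?_ rfl
    · have := (card_lt_iff_ne_univ t).2 ht
      simp only [List.length_append, List.length_map, length_toList] at hk ⊢
      omega
    · simp only [List.mem_append, List.mem_map, mem_toList]
      rintro _ (⟨g, -, rfl⟩ | hx)
      · exact ha g
      · exact hL _ (List.mem_append_right _ hx)

theorem transfer_mem_of_mem_closure [GradedRing 𝒜]
    (hdeg : ∀ (g : G) (d : ℕ), ∀ a ∈ 𝒜 d, g • a ∈ 𝒜 d)
    {u : A} (hu : u * Fintype.card G = 1) (huC : u ∈ closureFixedDegLE G 𝒜 (Fintype.card G))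
    {x : A} (hx : x ∈ Subring.closure {a | ∃ d ≤ 1, a ∈ 𝒜 d}) :
    transfer G x ∈ closureFixedDegLE G 𝒜 (Fintype.card G) := by
  refine (AddSubgroup.closure_le (K := (closureFixedDegLE G 𝒜 _).toAddSubgroup.comap
    (transfer G)) |>.2 ?_) (Subring.mem_closure_iff.1 hx)
  intro y hy
  obtain ⟨L, hL, rfl⟩ := Submonoid.exists_list_of_mem_closure hy
  exact transfer_list_prod_mem hdeg hu huC L hL

end Invariants

/-- Noether's bound; the Fleischmann–Fogarty theorem.
Let `A = ⊕_{d ≥ 0} A_d` be a commutative `ℕ`-graded ring with an action of a finite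
group `G` by degree-preserving ring automorphisms, such that `β(A) ≤ 1` and `|G|` is
a unit of `A`.  Then `β(A^G) ≤ |G|`, where `A^G` carries the induced grading. -/
theorem beta_fixed_le_card {G A : Type} [Group G] [Finite G] [CommRing A]
    [MulSemiringAction G A] (𝒜 : ℕ → AddSubgroup A) [GradedRing 𝒜]
    (hdeg : ∀ (g : G) (d : ℕ), ∀ a ∈ 𝒜 d, g • a ∈ 𝒜 d)
    (hbeta : beta (fun d => (𝒜 d : Set A)) ⊤ ≤ 1)
    (hunit : IsUnit ((Nat.card G : A))) :
    beta (fun d => (𝒜 d : Set A)) (fixedSubring G A) ≤ (Nat.card G : ℕ∞) := by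
  have : Fintype G := Fintype.ofFinite G
  rw [Nat.card_eq_fintype_card] at hunit ⊢
  set u : A := ↑hunit.unit⁻¹
  have hu : u * Fintype.card G = 1 := hunit.val_inv_mul
  have huC : u ∈ closureFixedDegLE G 𝒜 (Fintype.card G) := Subring.subset_closure
    ⟨smul_eq_self_of_mul_eq_one (fun g => map_natCast (toRingHom G A g) _) hu,
      0, Nat.zero_le _, mem_zero_of_mul_eq_one 𝒜 (SetLike.natCast_mem_graded 𝒜 _) hu⟩
  have hgen : ⊤ ≤ Subring.closure {a | ∃ d ≤ 1, a ∈ 𝒜 d} :=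
    (beta_le_coe_iff.1 hbeta).trans (Subring.closure_mono fun _ ha => ha.2)
  refine beta_le_coe_iff.2 fun x hx => ?_
  rw [← one_mul x, ← hu, mul_assoc, ← transfer_of_smul_eq hx]
  exact mul_mem huC (transfer_mem_of_mem_closure hdeg hu huC (hgen (Subring.mem_top x)))
end

section
/- Let k be a commutative ring and G a finite group with |G| a unit of k. Then for every ℕ-graded commutative k-algebra A with an action of G by degree-preserving k-algebra automorphisms one has β(A^G) ≤ β_k(G)·β(A). -/
/-- An `ℕ`-graded commutative `k`-algebra equipped with an action of `G` by
degree-preserving `k`-algebra automorphisms. -/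
structure GradedAlgebraWithAction (k : Type) [CommRing k] (G : Type) [Group G] :
    Type 1 where
  carrier : Type
  [commRing : CommRing carrier]
  [algebra : Algebra k carrier]
  grading : ℕ → Submodule k carrier
  graded : GradedAlgebra grading
  action : G →* (carrier ≃ₐ[k] carrier)
  degPres : ∀ (g : G) (d : ℕ), ∀ a ∈ grading d, action g a ∈ grading d

attribute [instance] GradedAlgebraWithAction.commRing GradedAlgebraWithAction.algebra

namespace GradedAlgebraWithAction

variable {k G : Type} [CommRing k] [Group G] (X : GradedAlgebraWithAction k G)

/-- The invariant subring `A^G`. -/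
def inv : Subring X.carrier where
  carrier := {a : X.carrier | ∀ g : G, X.action g a = a}
  mul_mem' := by intro a b ha hb g; rw [map_mul, ha g, hb g]
  one_mem' := fun g => map_one (X.action g)
  add_mem' := by intro a b ha hb g; rw [map_add, ha g, hb g]
  zero_mem' := fun g => map_zero (X.action g)
  neg_mem' := by intro a ha g; rw [map_neg, ha g]

/-- The invariant subring fixed by a subgroup `H ≤ G`. -/
def invSub (H : Subgroup G) : Subring X.carrier where
  carrier := {a : X.carrier | ∀ g ∈ H, X.action g a = a}
  mul_mem' := by intro a b ha hb g hg; rw [map_mul, ha g hg, hb g hg]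
  one_mem' := fun g _ => map_one (X.action g)
  add_mem' := by intro a b ha hb g hg; rw [map_add, ha g hg, hb g hg]
  zero_mem' := fun g _ => map_zero (X.action g)
  neg_mem' := by intro a ha g hg; rw [map_neg, ha g hg]

/-- `β(A)` of the underlying graded algebra. -/
noncomputable def betaTop : ℕ∞ := beta (fun d => (X.grading d : Set X.carrier)) ⊤

/-- `β(A^G)` for the induced grading on the invariant ring. -/
noncomputable def betaInv : ℕ∞ := beta (fun d => (X.grading d : Set X.carrier)) X.inv

end GradedAlgebraWithAction

/-- `β_k(G)`: the supremum of `β(A^G)` over all `ℕ`-graded commutative `k`-algebras `A`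
with an action of `G` by degree-preserving `k`-algebra automorphisms and `β(A) ≤ 1`. -/
noncomputable def betaRing (k : Type) [CommRing k] (G : Type) [Group G] : ℕ∞ :=
  ⨆ (X : GradedAlgebraWithAction k G) (_ : X.betaTop ≤ 1), X.betaInv

/-!
Let `n = β(A)` and `s = β_k(G)`, both finite. The homogeneous elements of `A` of degree `≤ n`
form a `G`-set `V`, and the polynomial ring `k[V]` with its standard grading is generated in
degree `1`, so its invariant ring is generated in degrees `≤ s`. Evaluation `k[V] → A` is
`G`-equivariant and surjective; since `|G|` is a unit, averaging over `G` lifts every invariant of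
`A` to an invariant of `k[V]`. A homogeneous invariant of degree `e ≤ s` is sent to an invariant
of `A` lying in degrees `≤ n e ≤ s n`, whose homogeneous components are again invariant.
When `n` or `s` is `0` or `∞` the bound follows from the conventions of `ℕ∞`, using that
`β_k(G) ≠ 0` unless `k = 0`.
-/

def homogeneousLE {A σ : Type*} [Membership A σ] (𝒜 : ℕ → σ) (n : ℕ) : Set A :=
  {a | ∃ d ≤ n, a ∈ 𝒜 d}

lemma homogeneousLE_mono {A σ : Type*} [Membership A σ] (𝒜 : ℕ → σ) {m n : ℕ}
    (h : m ≤ n) : homogeneousLE 𝒜 m ⊆ homogeneousLE 𝒜 n :=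
  fun _ ⟨d, hd, ha⟩ => ⟨d, hd.trans h, ha⟩

lemma beta_le_iff {A : Type*} [CommRing A] {𝒜 : ℕ → Set A} {B : Subring A} {n : ℕ} :
    beta 𝒜 B ≤ n ↔ B ≤ Subring.closure (B ∩ homogeneousLE 𝒜 n) := by
  let S := {m : ℕ | B ≤ Subring.closure (B ∩ homogeneousLE 𝒜 m)}
  have hS : ∀ {m n}, m ≤ n → m ∈ S → n ∈ S := fun hmn hm =>
    hm.trans (Subring.closure_mono (Set.inter_subset_inter_right _ (homogeneousLE_mono 𝒜 hmn)))
  refine ⟨fun h => ?_, fun h => sInf_le ⟨n, h, rfl⟩⟩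
  change sInf ((↑) '' S) ≤ (n : ℕ∞) at h
  have hne : ((↑) '' S : Set ℕ∞).Nonempty := by
    by_contra hempty
    rw [Set.not_nonempty_iff_eq_empty.1 hempty, sInf_empty, top_le_iff] at h
    exact ENat.natCast_ne_top n h
  obtain ⟨m, hm, hmeq⟩ := csInf_mem hne
  exact hS (by exact_mod_cast hmeq.trans_le h) hm

section GradedAlgebra

variable {k A : Type*} [CommRing k] [CommRing A] [Algebra k A] (𝒜 : ℕ → Submodule k A)

lemma closure_homogeneousLE_zero_le [SetLike.GradedMonoid 𝒜] :
    Subring.closure (homogeneousLE 𝒜 0) ≤ SetLike.GradeZero.subring 𝒜 :=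
  Subring.closure_le.2 fun _ ⟨_, hd, ha⟩ => by rwa [Nat.le_zero.1 hd] at ha

lemma span_homogeneousLE_mul_le [SetLike.GradedMonoid 𝒜] (m n : ℕ) :
    Submodule.span k (homogeneousLE 𝒜 m) * Submodule.span k (homogeneousLE 𝒜 n) ≤
      Submodule.span k (homogeneousLE 𝒜 (m + n)) := by
  rw [Submodule.span_mul_span]
  refine Submodule.span_mono ?_
  rintro _ ⟨a, ⟨d, hd, ha⟩, b, ⟨e, he, hb⟩, rfl⟩
  exact ⟨d + e, add_le_add hd he, SetLike.mul_mem_graded ha hb⟩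

lemma span_homogeneousLE_pow_le [SetLike.GradedMonoid 𝒜] (n e : ℕ) :
    Submodule.span k (homogeneousLE 𝒜 n) ^ e ≤
      Submodule.span k (homogeneousLE 𝒜 (n * e)) := by
  induction e with
  | zero =>
    rw [pow_zero, Submodule.one_eq_span, Submodule.span_le, Set.singleton_subset_iff]
    exact Submodule.subset_span ⟨0, le_rfl, SetLike.GradedOne.one_mem⟩
  | succ e ih =>
    grw [pow_succ, ih, span_homogeneousLE_mul_le]
    rfl

lemma aeval_mem_span_homogeneousLE [SetLike.GradedMonoid 𝒜] {ι : Type*} {v : ι → A} {n : ℕ}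
    (hv : ∀ i, v i ∈ homogeneousLE 𝒜 n) {p : MvPolynomial ι k} {e : ℕ}
    (hp : p.IsHomogeneous e) :
    MvPolynomial.aeval v p ∈ Submodule.span k (homogeneousLE 𝒜 (n * e)) := by
  have hmap : Submodule.map (MvPolynomial.aeval v).toLinearMap
      (MvPolynomial.homogeneousSubmodule ι k e) ≤
        Submodule.span k (homogeneousLE 𝒜 n) ^ e := by
    rw [← MvPolynomial.homogeneousSubmodule_one_pow, Submodule.map_pow,
      MvPolynomial.homogeneousSubmodule_one_eq_span_X, Submodule.map_span, ← Set.range_comp]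
    gcongr
    rintro _ ⟨i, rfl⟩
    simpa using hv i
  exact span_homogeneousLE_pow_le 𝒜 n e (hmap ⟨p, hp, rfl⟩)

lemma decompose_eq_zero_of_mem_span_homogeneousLE [GradedAlgebra 𝒜] {c d : ℕ} (hcd : c < d)
    {a : A} (ha : a ∈ Submodule.span k (homogeneousLE 𝒜 c)) :
    (DirectSum.decompose 𝒜 a d : A) = 0 := by
  induction ha using Submodule.span_induction with
  | mem a ha =>
    obtain ⟨e, he, ha⟩ := ha
    exact DirectSum.decompose_of_mem_ne 𝒜 ha (he.trans_lt hcd).ne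
  | zero => simp
  | add a b _ _ ha hb => simp [ha, hb]
  | smul r a _ ha =>
    rw [DirectSum.decompose_smul, DirectSum.smul_apply, Submodule.coe_smul, ha, smul_zero]

end GradedAlgebra

theorem exists_fixed_preimage_of_surjective {k S A G : Type*} [CommSemiring k] [Semiring S]
    [Semiring A] [Algebra k S] [Algebra k A] [Group G] [Finite G]
    (hunit : IsUnit (Nat.card G : k)) (ρ : G →* (S ≃ₐ[k] S)) (τ : G →* (A ≃ₐ[k] A))
    (f : S →ₐ[k] A) (hf : Function.Surjective f) (hfρ : ∀ g p, f (ρ g p) = τ g (f p))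
    {a : A} (ha : ∀ g, τ g a = a) : ∃ q, (∀ g, ρ g q = q) ∧ f q = a := by
  cases nonempty_fintype G
  obtain ⟨p, rfl⟩ := hf a
  -- the Reynolds operator `|G|⁻¹ ∑ g, ρ g`
  refine ⟨(↑hunit.unit⁻¹ : k) • ∑ g : G, ρ g p, fun h => ?_, ?_⟩
  · rw [map_smul, map_sum]
    congr 1
    exact Fintype.sum_equiv (Equiv.mulLeft h) _ _ fun g => by simp
  · simp only [map_smul, map_sum, hfρ, ha, Finset.sum_const, Finset.card_univ,
      ← Nat.card_eq_fintype_card, ← Nat.cast_smul_eq_nsmul k, smul_smul, IsUnit.val_inv_mul,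
      one_smul]

noncomputable def MvPolynomial.renameEquivHom (σ k : Type*) [CommSemiring k] :
    Equiv.Perm σ →* (MvPolynomial σ k ≃ₐ[k] MvPolynomial σ k) where
  toFun e := renameEquiv k e
  map_one' := renameEquiv_refl k
  map_mul' e f := (renameEquiv_trans k f e).symm

attribute [instance] GradedAlgebraWithAction.graded

namespace GradedAlgebraWithAction

variable {k G : Type} [CommRing k] [Group G] (X : GradedAlgebraWithAction k G)

lemma betaTop_le_iff {n : ℕ} :
    X.betaTop ≤ n ↔ Subring.closure (homogeneousLE X.grading n) = ⊤ := by
  rw [betaTop, beta_le_iff, top_le_iff, Subring.coe_top, Set.univ_inter]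
  rfl

lemma betaInv_le_iff {n : ℕ} :
    X.betaInv ≤ n ↔ X.inv ≤ Subring.closure (X.inv ∩ homogeneousLE X.grading n) :=
  beta_le_iff

lemma betaInv_le_betaRing (h : X.betaTop ≤ 1) : X.betaInv ≤ betaRing k G :=
  le_iSup₂ (f := fun (X : GradedAlgebraWithAction k G) (_ : X.betaTop ≤ 1) => X.betaInv) X h

lemma betaInv_eq_zero_of_subsingleton [Subsingleton k] : X.betaInv = 0 := by
  have := Module.subsingleton k X.carrier
  refine nonpos_iff_eq_zero.1 ((X.betaInv_le_iff (n := 0)).2 fun a _ => ?_)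
  rw [Subsingleton.elim a 0]
  exact zero_mem _

lemma betaInv_eq_zero_of_betaTop_eq_zero (h : X.betaTop = 0) : X.betaInv = 0 := by
  rw [← Nat.cast_zero] at h
  refine nonpos_iff_eq_zero.1 ((X.betaInv_le_iff (n := 0)).2 fun a ha =>
    Subring.subset_closure ⟨ha, 0, le_rfl, ?_⟩)
  exact closure_homogeneousLE_zero_le X.grading
    ((X.betaTop_le_iff.1 h.le).symm ▸ Subring.mem_top a)

noncomputable def mvPolynomial (σ : Type) (π : G →* Equiv.Perm σ) :
    GradedAlgebraWithAction k G where
  carrier := MvPolynomial σ k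
  grading := MvPolynomial.homogeneousSubmodule σ k
  graded := MvPolynomial.gradedAlgebra
  action := (MvPolynomial.renameEquivHom σ k).comp π
  degPres _ _ _ hp := hp.rename_isHomogeneous

lemma betaTop_mvPolynomial_le_one (σ : Type) (π : G →* Equiv.Perm σ) :
    (mvPolynomial (k := k) σ π).betaTop ≤ 1 := by
  rw [← Nat.cast_one, betaTop_le_iff, eq_top_iff]
  rintro p -
  induction p using MvPolynomial.induction_on with
  | C a => exact Subring.subset_closure ⟨0, zero_le_one, MvPolynomial.isHomogeneous_C _ a⟩
  | add p q hp hq => exact add_mem hp hq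
  | mul_X p i hp =>
    exact mul_mem hp (Subring.subset_closure ⟨1, le_rfl, MvPolynomial.isHomogeneous_X k i⟩)

lemma decompose_action (g : G) (a : X.carrier) (d : ℕ) :
    (DirectSum.decompose X.grading (X.action g a) d : X.carrier) =
      X.action g (DirectSum.decompose X.grading a d) := by
  induction a using DirectSum.Decomposition.inductionOn X.grading with
  | zero => simp
  | @homogeneous i a =>
    obtain rfl | hid := eq_or_ne i d
    · rw [DirectSum.decompose_of_mem_same X.grading a.2,
        DirectSum.decompose_of_mem_same X.grading (X.degPres g i a a.2)]
    · rw [DirectSum.decompose_of_mem_ne X.grading a.2 hid,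
        DirectSum.decompose_of_mem_ne X.grading (X.degPres g i a a.2) hid, map_zero]
  | add a b ha hb => simp only [map_add, DirectSum.decompose_add, DirectSum.add_apply,
      Submodule.coe_add, ha, hb]

lemma mem_closure_inv_inter_of_mem_span {c : ℕ} {b : X.carrier} (hb : b ∈ X.inv)
    (hbc : b ∈ Submodule.span k (homogeneousLE X.grading c)) :
    b ∈ Subring.closure (X.inv ∩ homogeneousLE X.grading c) := by
  classical
  rw [← DirectSum.sum_support_decompose X.grading b]
  refine sum_mem fun d _ => ?_
  rcases le_or_gt d c with hdc | hcd
  · refine Subring.subset_closure ⟨fun g => ?_, d, hdc, SetLike.coe_mem _⟩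
    rw [← decompose_action, hb g]
  · rw [decompose_eq_zero_of_mem_span_homogeneousLE X.grading hcd hbc]
    exact zero_mem _

lemma action_mem_homogeneousLE (g : G) {n : ℕ} {a : X.carrier}
    (ha : a ∈ homogeneousLE X.grading n) : X.action g a ∈ homogeneousLE X.grading n :=
  let ⟨d, hd, had⟩ := ha
  ⟨d, hd, X.degPres g d a had⟩

def homogeneousLEPerm (n : ℕ) : G →* Equiv.Perm (homogeneousLE X.grading n) where
  toFun g := Equiv.Perm.subtypePerm (X.action g).toEquiv fun a =>
    ⟨fun h => by simpa using X.action_mem_homogeneousLE g⁻¹ h, X.action_mem_homogeneousLE g⟩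
  map_one' := by ext; simp
  map_mul' g h := by ext; simp; rfl

noncomputable def cover (n : ℕ) : GradedAlgebraWithAction k G :=
  mvPolynomial (homogeneousLE X.grading n) (X.homogeneousLEPerm n)

noncomputable def coverEval (n : ℕ) : (X.cover n).carrier →ₐ[k] X.carrier :=
  MvPolynomial.aeval Subtype.val

lemma coverEval_action (n : ℕ) (g : G) (p : (X.cover n).carrier) :
    X.coverEval n ((X.cover n).action g p) = X.action g (X.coverEval n p) :=
  (MvPolynomial.aeval_rename _ _ p).trans
    (MvPolynomial.comp_aeval_apply _ (X.action g).toAlgHom p).symm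

lemma coverEval_surjective {n : ℕ} (h : X.betaTop ≤ n) :
    Function.Surjective (X.coverEval n) := by
  intro a
  have hrange : Subring.closure (homogeneousLE X.grading n) ≤ (X.coverEval n).toRingHom.range :=
    Subring.closure_le.2 fun b hb =>
      RingHom.mem_range.2 ⟨(MvPolynomial.X ⟨b, hb⟩ : MvPolynomial _ k), by
        exact MvPolynomial.aeval_X _ _⟩
  exact hrange ((X.betaTop_le_iff.1 h).symm ▸ Subring.mem_top a)

lemma coverEval_mem_closure {n s : ℕ} {p : (X.cover n).carrier}
    (hp : p ∈ ((X.cover n).inv : Set _) ∩ homogeneousLE (X.cover n).grading s) :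
    X.coverEval n p ∈ Subring.closure (X.inv ∩ homogeneousLE X.grading (s * n)) := by
  obtain ⟨hinv, e, hes, hpe⟩ := hp
  refine X.mem_closure_inv_inter_of_mem_span (fun g => ?_) ?_
  · rw [← coverEval_action, hinv g]
  · refine Submodule.span_mono (homogeneousLE_mono _ ?_)
      (aeval_mem_span_homogeneousLE X.grading (fun i => i.2) hpe)
    exact (Nat.mul_le_mul_left n hes).trans_eq (mul_comm n s)

theorem betaInv_le_mul [Finite G] (hunit : IsUnit (Nat.card G : k)) {n s : ℕ}
    (hX : X.betaTop ≤ n) (hcover : (X.cover n).betaInv ≤ s) : X.betaInv ≤ s * n := by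
  rw [← Nat.cast_mul, betaInv_le_iff]
  intro a ha
  obtain ⟨q, hq, rfl⟩ := exists_fixed_preimage_of_surjective hunit (X.cover n).action X.action
    (X.coverEval n) (X.coverEval_surjective hX) (X.coverEval_action n) ha
  have hmap : Subring.map (X.coverEval n).toRingHom
      (Subring.closure ((X.cover n).inv ∩ homogeneousLE (X.cover n).grading s)) ≤
        Subring.closure (X.inv ∩ homogeneousLE X.grading (s * n)) := by
    rw [RingHom.map_closure]
    exact Subring.closure_le.2 (Set.image_subset_iff.2 fun p hp => X.coverEval_mem_closure hp)
  exact hmap (Subring.mem_map.2 ⟨q, (X.cover n).betaInv_le_iff.1 hcover hq, rfl⟩)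

end GradedAlgebraWithAction

lemma betaRing_ne_zero (k G : Type) [CommRing k] [Nontrivial k] [Group G] :
    betaRing k G ≠ 0 := by
  -- in `k[x]` with trivial action, `x` is invariant but not of degree `0`
  let T : GradedAlgebraWithAction k G := .mvPolynomial Unit 1
  intro h0
  have hT : T.betaInv ≤ (0 : ℕ) := by
    simpa [h0] using
      T.betaInv_le_betaRing (GradedAlgebraWithAction.betaTop_mvPolynomial_le_one _ _)
  have hX : (MvPolynomial.X () : MvPolynomial Unit k) ∈ T.inv := fun g => by
    change MvPolynomial.rename _ (MvPolynomial.X ()) = _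
    rw [MvPolynomial.rename_X]
  have hX0 : MvPolynomial.X () ∈ MvPolynomial.homogeneousSubmodule Unit k 0 :=
    closure_homogeneousLE_zero_le T.grading
      (Subring.closure_mono Set.inter_subset_right (T.betaInv_le_iff.1 hT hX))
  exact one_ne_zero
    ((MvPolynomial.isHomogeneous_X k ()).inj_right hX0 (MvPolynomial.X_ne_zero ()))

/-- Let `k` be a commutative ring and `G` a finite group with `|G|`
a unit of `k`.  Then for every `ℕ`-graded commutative `k`-algebra `A` with an action
of `G` by degree-preserving `k`-algebra automorphisms one has
`β(A^G) ≤ β_k(G) ⬝ β(A)`. -/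
theorem betaInv_le_betaRing_mul_betaTop (k G : Type) [CommRing k] [Group G] [Finite G]
    (hunit : IsUnit ((Nat.card G : k))) (X : GradedAlgebraWithAction k G) :
    X.betaInv ≤ betaRing k G * X.betaTop := by
  rcases subsingleton_or_nontrivial k with hk | hk
  · rw [X.betaInv_eq_zero_of_subsingleton]
    exact zero_le
  cases hT : X.betaTop using ENat.recTopCoe with
  | top => rw [ENat.mul_top (betaRing_ne_zero k G)]; exact le_top
  | coe n =>
    rcases Nat.eq_zero_or_pos n with rfl | hn
    · rw [X.betaInv_eq_zero_of_betaTop_eq_zero (by simpa using hT)]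
      exact zero_le
    cases hR : betaRing k G using ENat.recTopCoe with
    | top => rw [ENat.top_mul (by positivity)]; exact le_top
    | coe s =>
      exact X.betaInv_le_mul hunit hT.le
        (hR ▸ (X.cover n).betaInv_le_betaRing
          (GradedAlgebraWithAction.betaTop_mvPolynomial_le_one _ _))
end

section
/- Let k be a commutative ring and G a finite group with |G| a unit of k. Then η_k(G) = β_k(G). -/
/-- A (not necessarily graded) commutative `k`-algebra equipped with an action of `G`
by `k`-algebra automorphisms. -/
structure AlgebraWithAction (k : Type) [CommRing k] (G : Type) [Group G] : Type 1 where
  carrier : Type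
  [commRing : CommRing carrier]
  [algebra : Algebra k carrier]
  action : G →* (carrier ≃ₐ[k] carrier)

attribute [instance] AlgebraWithAction.commRing AlgebraWithAction.algebra

/-- `η_G(m) = inf {d : m ^ d ⊆ ⟨m^G⟩}` for a `G`-invariant ideal `m` of a commutative
`k`-algebra with `G`-action. -/
noncomputable def etaOf {k G : Type} [CommRing k] [Group G] (X : AlgebraWithAction k G)
    (m : Ideal X.carrier) : ℕ∞ :=
  sInf ((↑) '' {d : ℕ | m ^ d ≤
    Ideal.span {a : X.carrier | a ∈ m ∧ ∀ g : G, X.action g a = a}})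

/-- `η_k(G)`: the supremum of `η_G(m)` over all commutative `k`-algebras `A` with an
action of `G` by `k`-algebra automorphisms and all `G`-invariant ideals `m ⊆ A`. -/
noncomputable def etaRing (k : Type) [CommRing k] (G : Type) [Group G] : ℕ∞ :=
  ⨆ (X : AlgebraWithAction k G) (m : Ideal X.carrier)
    (_ : ∀ (g : G), ∀ a ∈ m, X.action g a ∈ m), etaOf X m

/-!
`η ≤ β`: let `G` permute the second index of the variables of `k[x_{i,g}, y_g]` (`i < n`,
`g ∈ G`). This graded algebra is generated in degree `1`, so if `β_k(G) = n`, its invariant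
`W = ∑_g x_{1,g} ⋯ x_{n,g} y_g` of degree `n + 1` is a polynomial in invariants of degree `≤ n`.
Given `v_1, …, v_n ∈ m`, evaluate `x_{i,g} ↦ g v_i` and `y_g ↦ δ_{g,1} ε` in the dual numbers over
`A ⧸ ⟨m^G⟩`. Invariants of positive degree land in `ε (A ⧸ ⟨m^G⟩)`, so a product of two of them
vanishes; hence a polynomial in invariants of degree `≤ n` has zero image in each degree `> n`.
But `W` goes to `(v_1 ⋯ v_n) ε`, so `v_1 ⋯ v_n ∈ ⟨m^G⟩`.

`β ≤ η`: take `m = A₊`. As `A` is generated in degree `1`, `A_e ⊆ m^e`; so if `m^d ⊆ ⟨m^G⟩`, a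
homogeneous invariant `a` of degree `e > d` lies in `m^{e-d} ⟨m^G⟩`. Apply the Reynolds operator
(`|G|` is invertible) and take the degree-`e` component. This writes `a` as a sum of products of
invariants of degree `< e` with invariants of degree `≤ d`, and we induct on `e`.
-/

theorem ENat.sInf_image_natCast_le_iff {T : Set ℕ} (hT : ∀ ⦃a b⦄, a ≤ b → a ∈ T → b ∈ T)
    (n : ℕ) : sInf (((↑) : ℕ → ℕ∞) '' T) ≤ n ↔ n ∈ T := by
  refine ⟨fun h => ?_, fun hn => sInf_le ⟨n, hn, rfl⟩⟩
  obtain ⟨_, ⟨a, ha, rfl⟩, han⟩ :=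
    sInf_lt_iff.1 ((ENat.lt_add_one_iff (ENat.natCast_ne_top n)).2 h)
  exact hT (by exact_mod_cast (ENat.lt_add_one_iff (ENat.natCast_ne_top n)).1 han) ha

theorem beta_le_natCast_iff {A : Type*} [CommRing A] (𝒜 : ℕ → Set A) (B : Subring A) (n : ℕ) :
    beta 𝒜 B ≤ n ↔ B ≤ Subring.closure {a : A | a ∈ B ∧ ∃ d ≤ n, a ∈ 𝒜 d} :=
  ENat.sInf_image_natCast_le_iff (fun _ _ hab hB => hB.trans <| Subring.closure_mono <| by
    rintro a ⟨haB, d, hd, ha⟩; exact ⟨haB, d, hd.trans hab, ha⟩) n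

theorem etaOf_le_natCast_iff {k G : Type} [CommRing k] [Group G] (X : AlgebraWithAction k G)
    (m : Ideal X.carrier) (n : ℕ) :
    etaOf X m ≤ n ↔ m ^ n ≤ Ideal.span {a : X.carrier | a ∈ m ∧ ∀ g : G, X.action g a = a} :=
  ENat.sInf_image_natCast_le_iff (fun _ _ hab h => (Ideal.pow_le_pow_right hab).trans h) n

namespace GradedRing

open DirectSum HomogeneousIdeal Finset

variable {A σ : Type*} [CommRing A] [SetLike σ A] [AddSubgroupClass σ A] (𝒜 : ℕ → σ)
  [GradedRing 𝒜]

theorem proj_mul (x y : A) (n : ℕ) :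
    proj 𝒜 n (x * y) = ∑ ij ∈ antidiagonal n, proj 𝒜 ij.1 x * proj 𝒜 ij.2 y := by
  simp only [proj_apply, decompose_mul, coe_mul_apply_eq_sum_antidiagonal]

theorem proj_of_mem {x : A} {i : ℕ} (hx : x ∈ 𝒜 i) (n : ℕ) :
    proj 𝒜 n x = if i = n then x else 0 := by
  split_ifs with h
  · exact h ▸ decompose_of_mem_same 𝒜 hx
  · exact decompose_of_mem_ne 𝒜 hx h

theorem proj_map {F : Type*} [FunLike F A A] [AddMonoidHomClass F A A] (f : F)
    (hf : ∀ d, ∀ a ∈ 𝒜 d, f a ∈ 𝒜 d) (n : ℕ) (x : A) :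
    proj 𝒜 n (f x) = f (proj 𝒜 n x) := by
  induction x using DirectSum.Decomposition.inductionOn 𝒜 with
  | zero => simp
  | homogeneous a =>
    rw [proj_of_mem 𝒜 (hf _ _ a.2), proj_of_mem 𝒜 a.2]
    split_ifs <;> simp
  | add x y hx hy => simp only [map_add, hx, hy]

theorem proj_eq_zero_of_mem_irrelevant_pow {p : ℕ} {x : A} (hx : x ∈ (𝒜₊).toIdeal ^ p)
    {i : ℕ} (hi : i < p) : proj 𝒜 i x = 0 := by
  induction p generalizing x i with
  | zero => omega
  | succ p ih =>
    rw [pow_succ] at hx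
    suffices ∀ j, j < p + 1 → proj 𝒜 j x = 0 from this i hi
    refine Submodule.mul_induction_on hx (fun y hy z hz i hi => ?_) fun y z hy hz i hi => ?_
    · refine (proj_mul 𝒜 y z i).trans (sum_eq_zero fun ab hab => ?_)
      rw [HasAntidiagonal.mem_antidiagonal] at hab
      rcases lt_or_ge ab.1 p with ha | ha
      · rw [ih hy ha, zero_mul]
      · rw [show ab.2 = 0 by omega, (mem_irrelevant_iff 𝒜 z).1 hz, mul_zero]
    · rw [map_add, hy i hi, hz i hi, add_zero]

theorem proj_mem_irrelevant_pow
    (h : Subring.closure {a : A | ∃ d ≤ 1, a ∈ 𝒜 d} = ⊤) (x : A) (e : ℕ) :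
    proj 𝒜 e x ∈ (𝒜₊).toIdeal ^ e := by
  have hx : x ∈ Subring.closure {a : A | ∃ d ≤ 1, a ∈ 𝒜 d} := h ▸ Subring.mem_top x
  induction hx using Subring.closure_induction generalizing e with
  | mem a ha =>
    obtain ⟨d, hd, ha⟩ := ha
    rw [proj_of_mem 𝒜 ha]
    split_ifs with hde
    · interval_cases d
      · simp [← hde]
      · simpa [← hde] using mem_irrelevant_of_mem 𝒜 one_pos ha
    · exact zero_mem _
  | zero => simp
  | one =>
    rw [proj_of_mem 𝒜 SetLike.GradedOne.one_mem]
    split_ifs with he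
    · simp [← he]
    · exact zero_mem _
  | add x y _ _ hx hy => rw [map_add]; exact add_mem (hx e) (hy e)
  | neg x _ hx => rw [map_neg]; exact neg_mem (hx e)
  | mul x y _ _ hx hy =>
    rw [proj_mul]
    refine sum_mem fun ij hij => ?_
    rw [← mem_antidiagonal.1 hij, pow_add]
    exact Ideal.mul_mem_mul (hx _) (hy _)

section SqZeroTruncation

variable {B R σ : Type*} [CommRing B] [CommRing R] [SetLike σ B] [AddSubgroupClass σ B]
  (𝒜 : ℕ → σ) [GradedRing 𝒜] (ψ : B →+* R) {I : Ideal R} (hI : I * I = ⊥) (n : ℕ)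

def sqZeroTruncation : Subring B where
  carrier := {x | (∀ N ≠ 0, ψ (proj 𝒜 N x) ∈ I) ∧ ∀ N, n < N → ψ (proj 𝒜 N x) = 0}
  mul_mem' {x y} hx hy := by
    simp only [Set.mem_ofPred_eq, proj_mul, map_sum, map_mul] at hx hy ⊢
    refine ⟨fun N hN => sum_mem fun ij hij => ?_, fun N hN => sum_eq_zero fun ij hij => ?_⟩ <;>
      rw [HasAntidiagonal.mem_antidiagonal] at hij
    · by_cases hi : ij.1 = 0
      · exact I.mul_mem_left _ (hy.1 _ (by omega))
      · exact I.mul_mem_right _ (hx.1 _ hi)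
    · by_cases hi : ij.1 = 0
      · rw [hy.2 _ (by omega), mul_zero]
      by_cases hj : ij.2 = 0
      · rw [hx.2 _ (by omega), zero_mul]
      rw [← Ideal.mem_bot, ← hI]
      exact Ideal.mul_mem_mul (hx.1 _ hi) (hy.1 _ hj)
  one_mem' := by
    refine ⟨fun N hN => ?_, fun N hN => ?_⟩ <;>
      rw [proj_of_mem 𝒜 SetLike.GradedOne.one_mem, if_neg (by omega), map_zero]
    exact I.zero_mem
  add_mem' hx hy := ⟨fun N hN => by rw [map_add, map_add]; exact I.add_mem (hx.1 N hN) (hy.1 N hN),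
    fun N hN => by rw [map_add, map_add, hx.2 N hN, hy.2 N hN, add_zero]⟩
  zero_mem' := ⟨fun _ _ => by rw [map_zero, map_zero]; exact I.zero_mem, fun _ _ => by simp⟩
  neg_mem' hx := ⟨fun N hN => by rw [map_neg, map_neg]; exact I.neg_mem (hx.1 N hN),
    fun N hN => by rw [map_neg, map_neg, hx.2 N hN, neg_zero]⟩

variable {𝒜 ψ n}

theorem mem_sqZeroTruncation_of_mem {x : B} {d : ℕ} (hx : x ∈ 𝒜 d) (hdn : d ≤ n)
    (hxI : d ≠ 0 → ψ x ∈ I) : x ∈ sqZeroTruncation 𝒜 ψ hI n := by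
  refine ⟨fun N hN => ?_, fun N hN => ?_⟩ <;> rw [proj_of_mem 𝒜 hx] <;> split_ifs with h
  · exact hxI (h ▸ hN)
  · simp
  · omega
  · simp

end SqZeroTruncation

end GradedRing

theorem MvPolynomial.IsHomogeneous.aeval_mem {k A σ : Type*} [CommRing k] [CommRing A]
    [Algebra k A] {p : MvPolynomial σ k} {d : ℕ} (hp : p.IsHomogeneous d) (hd : d ≠ 0)
    {I : Ideal A} {f : σ → A} (hf : ∀ i, f i ∈ I) : MvPolynomial.aeval f p ∈ I := by
  rw [← Ideal.Quotient.eq_zero_iff_mem, ← Ideal.Quotient.mkₐ_eq_mk k, ← AlgHom.comp_apply,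
    MvPolynomial.comp_aeval]
  have hp0 : constantCoeff p = 0 := by
    rw [constantCoeff_eq]
    exact hp.coeff_eq_zero (by simpa [eq_comm] using hd)
  simp [Ideal.Quotient.eq_zero_iff_mem.2 (hf _), hp0]

theorem TrivSqZeroExt.ker_fstHom_mul_self (R M : Type*) [CommRing R] [AddCommGroup M] [Module R M]
    [Module Rᵐᵒᵖ M] [IsCentralScalar R M] :
    RingHom.ker (fstHom R R M) * RingHom.ker (fstHom R R M) = ⊥ := by
  refine le_bot_iff.1 (Ideal.mul_le.2 fun x hx y hy => ?_)
  rw [RingHom.mem_ker, fstHom_apply] at hx hy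
  rw [Ideal.mem_bot]
  ext <;> simp [hx, hy]

section Reynolds

variable {k A G : Type*} [CommRing k] [CommRing A] [Algebra k A] [Group G] [Fintype G]
  [Invertible (Fintype.card G : k)] (ρ : G →* A ≃ₐ[k] A)

noncomputable def reynolds : A →ₗ[k] A :=
  ⅟(Fintype.card G : k) • ∑ g, (ρ g).toLinearMap

theorem reynolds_apply (a : A) : reynolds ρ a = ⅟(Fintype.card G : k) • ∑ g, ρ g a := by
  simp [reynolds]

theorem reynolds_invariant (h : G) (a : A) : ρ h (reynolds ρ a) = reynolds ρ a := by
  rw [reynolds_apply, map_smul, map_sum]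
  exact congrArg _ (Fintype.sum_equiv (Equiv.mulLeft h) _ _ fun g => by simp)

theorem reynolds_eq_self {a : A} (ha : ∀ g, ρ g a = a) : reynolds ρ a = a := by
  simp [reynolds_apply, ha, ← Nat.cast_smul_eq_nsmul k, smul_smul]

theorem reynolds_mul_of_invariant (x : A) {v : A} (hv : ∀ g, ρ g v = v) :
    reynolds ρ (x * v) = reynolds ρ x * v := by
  simp [reynolds_apply, hv, Finset.sum_mul]

theorem reynolds_mem {M : Submodule k A} (hM : ∀ g, ∀ a ∈ M, ρ g a ∈ M) {a : A} (ha : a ∈ M) :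
    reynolds ρ a ∈ M := by
  rw [reynolds_apply]
  exact M.smul_mem _ (sum_mem fun g _ => hM g a ha)

end Reynolds

namespace GradedAlgebraWithAction

open GradedRing HomogeneousIdeal Finset

attribute [local instance] GradedAlgebraWithAction.graded

variable {k G : Type} [CommRing k] [Group G] (X : GradedAlgebraWithAction k G)

def invClosure (d : ℕ) : Subring X.carrier :=
  Subring.closure {a | a ∈ X.inv ∧ ∃ j ≤ d, a ∈ X.grading j}

theorem proj_action (g : G) (n : ℕ) (x : X.carrier) :
    proj X.grading n (X.action g x) = X.action g (proj X.grading n x) :=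
  proj_map X.grading (X.action g) (X.degPres g) n x

theorem proj_mem_inv {a : X.carrier} (ha : a ∈ X.inv) (n : ℕ) : proj X.grading n a ∈ X.inv :=
  fun g => by rw [← proj_action, ha g]

theorem action_mem_irrelevant (g : G) {a : X.carrier} (ha : a ∈ (X.grading₊).toIdeal) :
    X.action g a ∈ (X.grading₊).toIdeal :=
  (mem_irrelevant_iff _ _).2 <| by rw [proj_action, (mem_irrelevant_iff _ a).1 ha, map_zero]

section Reynolds

variable [Fintype G] [Invertible (Fintype.card G : k)]

theorem proj_reynolds (n : ℕ) (x : X.carrier) :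
    proj X.grading n (reynolds X.action x) = reynolds X.action (proj X.grading n x) :=
  proj_map X.grading (reynolds X.action) (fun d _ => reynolds_mem _ (X.degPres · d)) n x

variable {X} {d e : ℕ}

theorem proj_reynolds_mul_mem_invClosure
    (ih : ∀ i < e, ∀ a ∈ X.inv, a ∈ X.grading i → a ∈ X.invClosure d) {p t : X.carrier}
    (hp : p ∈ (X.grading₊).toIdeal ^ (e - d)) (ht : t ∈ (X.grading₊).toIdeal) (htinv : t ∈ X.inv) :
    proj X.grading e (reynolds X.action (p * t)) ∈ X.invClosure d := by
  rw [reynolds_mul_of_invariant _ _ htinv, proj_mul]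
  refine sum_mem fun ij hij => ?_
  rw [HasAntidiagonal.mem_antidiagonal] at hij
  rcases Nat.eq_zero_or_pos ij.2 with hj | hj
  · rw [hj, (mem_irrelevant_iff _ t).1 ht, mul_zero]
    exact zero_mem _
  rcases lt_or_ge ij.1 (e - d) with hi | hi
  · rw [proj_reynolds, proj_eq_zero_of_mem_irrelevant_pow _ hp hi, map_zero, zero_mul]
    exact zero_mem _
  refine mul_mem (ih ij.1 (by omega) _ ?_ (SetLike.coe_mem _)) ?_
  · exact proj_mem_inv X (reynolds_invariant X.action · p) _
  · exact Subring.subset_closure ⟨proj_mem_inv X htinv _, ij.2, by omega, SetLike.coe_mem _⟩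

theorem proj_reynolds_mem_invClosure
    (ih : ∀ i < e, ∀ a ∈ X.inv, a ∈ X.grading i → a ∈ X.invClosure d) {y : X.carrier}
    (hy : y ∈ (X.grading₊).toIdeal ^ (e - d) *
      Ideal.span {a | a ∈ (X.grading₊).toIdeal ∧ ∀ g : G, X.action g a = a}) :
    proj X.grading e (reynolds X.action y) ∈ X.invClosure d := by
  refine Submodule.mul_induction_on hy (fun p hp q hq => ?_) fun y z hy hz => ?_
  · induction hq using Submodule.span_induction generalizing p with
    | mem t ht => exact proj_reynolds_mul_mem_invClosure ih hp ht.1 ht.2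
    | zero => simp
    | add q q' _ _ hq hq' => rw [mul_add, map_add, map_add]; exact add_mem (hq _ hp) (hq' _ hp)
    | smul c q _ hq => rw [smul_eq_mul, ← mul_assoc]; exact hq _ (Ideal.mul_mem_right c _ hp)
  · rw [map_add, map_add]
    exact add_mem hy hz

theorem mem_invClosure_of_mem_grading
    (htop : Subring.closure {a | ∃ d ≤ 1, a ∈ X.grading d} = ⊤)
    (hd : (X.grading₊).toIdeal ^ d ≤
      Ideal.span {a | a ∈ (X.grading₊).toIdeal ∧ ∀ g : G, X.action g a = a})
    (e : ℕ) : ∀ a ∈ X.inv, a ∈ X.grading e → a ∈ X.invClosure d := by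
  induction e using Nat.strong_induction_on with | _ e ih =>
  intro a ha hae
  by_cases hed : e ≤ d
  · exact Subring.subset_closure ⟨ha, e, hed, hae⟩
  have hproj : proj X.grading e a = a := (proj_of_mem _ hae e).trans (if_pos rfl)
  have hsplit : (X.grading₊).toIdeal ^ e =
      (X.grading₊).toIdeal ^ (e - d) * (X.grading₊).toIdeal ^ d := by
    rw [← pow_add, Nat.sub_add_cancel (by omega)]
  have ham := hproj ▸ proj_mem_irrelevant_pow X.grading htop a e
  rw [hsplit] at ham
  have hrey : a = proj X.grading e (reynolds X.action a) := by
    rw [reynolds_eq_self _ ha, hproj]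
  rw [hrey]
  exact proj_reynolds_mem_invClosure ih (Ideal.mul_mono_right hd ham)

theorem inv_le_invClosure
    (htop : Subring.closure {a | ∃ d ≤ 1, a ∈ X.grading d} = ⊤)
    (hd : (X.grading₊).toIdeal ^ d ≤
      Ideal.span {a | a ∈ (X.grading₊).toIdeal ∧ ∀ g : G, X.action g a = a}) :
    X.inv ≤ X.invClosure d := by
  classical
  intro a ha
  rw [← DirectSum.sum_support_decompose X.grading a]
  exact sum_mem fun i _ =>
    mem_invClosure_of_mem_grading htop hd i _ (proj_mem_inv X ha i) (SetLike.coe_mem _)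

variable (X)

theorem betaInv_le_etaOf (hX : X.betaTop ≤ 1) :
    X.betaInv ≤ etaOf ⟨X.carrier, X.action⟩ (X.grading₊).toIdeal := by
  have htop := (beta_le_natCast_iff _ ⊤ 1).1 (by exact_mod_cast hX)
  simp only [Subring.mem_top, true_and, top_le_iff] at htop
  exact le_sInf <| Set.forall_mem_image.2 fun d hd =>
    (beta_le_natCast_iff _ _ d).2 (inv_le_invClosure htop hd)

theorem betaInv_le_etaRing (hX : X.betaTop ≤ 1) : X.betaInv ≤ etaRing k G :=
  (X.betaInv_le_etaOf hX).trans <|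
    le_iSup₂_of_le ⟨X.carrier, X.action⟩ _ (le_iSup_of_le X.action_mem_irrelevant le_rfl)

end Reynolds

end GradedAlgebraWithAction

section Translation

open MvPolynomial

variable (k G : Type) [CommRing k] [Group G] (ι : Type)

noncomputable def translationAction :
    G →* (MvPolynomial (ι × G) k ≃ₐ[k] MvPolynomial (ι × G) k) where
  toFun g := renameEquiv k ((Equiv.refl ι).prodCongr (Equiv.mulLeft g))
  map_one' := AlgEquiv.coe_toAlgHom_injective <| algHom_ext fun _ => by simp
  map_mul' _ _ :=
    AlgEquiv.coe_toAlgHom_injective <| algHom_ext fun _ => by simp [Prod.map, mul_assoc]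

variable {k G ι}

@[simp]
theorem translationAction_X (g : G) (w : ι × G) :
    translationAction k G ι g (X w) = X (w.1, g * w.2) := by
  simp [translationAction, Prod.map]

variable (k G ι)

noncomputable def GradedAlgebraWithAction.translationPolynomial : GradedAlgebraWithAction k G where
  carrier := MvPolynomial (ι × G) k
  grading := homogeneousSubmodule (ι × G) k
  graded := gradedAlgebra
  action := translationAction k G ι
  degPres _ _ _ ha := IsHomogeneous.rename_isHomogeneous ha

theorem GradedAlgebraWithAction.translationPolynomial_betaTop_le_one :
    (translationPolynomial k G ι).betaTop ≤ 1 := by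
  refine (beta_le_natCast_iff _ _ 1).2 ?_
  rintro p -
  induction p using MvPolynomial.induction_on with
  | C c => exact Subring.subset_closure ⟨trivial, 0, zero_le_one, isHomogeneous_C _ c⟩
  | add p q hp hq => exact add_mem hp hq
  | mul_X p w hp =>
    exact mul_mem hp (Subring.subset_closure ⟨trivial, 1, le_rfl, isHomogeneous_X _ w⟩)

end Translation

section OrbitMonomialSum

open MvPolynomial

variable (k G : Type) [CommRing k] [Fintype G] (κ : Type) [Fintype κ]

-- `none` indexes the variables `y_g` of the proof sketch above, `some i` the `x_{i,g}`.
noncomputable def orbitMonomialSum : MvPolynomial (Option κ × G) k :=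
  ∑ g, (∏ i, X (some i, g)) * X (none, g)

theorem translationAction_orbitMonomialSum [Group G] (g : G) :
    translationAction k G (Option κ) g (orbitMonomialSum k G κ) = orbitMonomialSum k G κ := by
  simp only [orbitMonomialSum, map_sum, map_mul, map_prod, translationAction_X]
  exact Fintype.sum_equiv (Equiv.mulLeft g) _ _ fun _ => rfl

theorem isHomogeneous_orbitMonomialSum :
    (orbitMonomialSum k G κ).IsHomogeneous (Fintype.card κ + 1) := by
  refine IsHomogeneous.sum _ _ _ fun g _ => IsHomogeneous.mul ?_ (isHomogeneous_X k _)
  have := IsHomogeneous.prod Finset.univ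
    (fun i : κ => (X (some i, g) : MvPolynomial (Option κ × G) k)) (fun _ => 1)
    fun i _ => isHomogeneous_X k _
  simp only [Finset.sum_const, smul_eq_mul, mul_one] at this
  exact this

end OrbitMonomialSum

namespace AlgebraWithAction

open MvPolynomial DualNumber TrivSqZeroExt

variable {k G : Type} [CommRing k] [Group G] (X : AlgebraWithAction k G) {κ : Type}

noncomputable def orbitEval (v : κ → X.carrier) : MvPolynomial (κ × G) k →ₐ[k] X.carrier :=
  aeval fun w => X.action w.2 (v w.1)

theorem orbitEval_translationAction (v : κ → X.carrier) (g : G) (q : MvPolynomial (κ × G) k) :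
    X.orbitEval v (translationAction k G κ g q) = X.action g (X.orbitEval v q) := by
  suffices (X.orbitEval v).comp (translationAction k G κ g : _ →ₐ[k] _) =
      (X.action g : _ →ₐ[k] _).comp (X.orbitEval v) from DFunLike.congr_fun this q
  exact algHom_ext fun w => by simp [orbitEval, map_mul]

open scoped Classical in
noncomputable def dualEval (J : Ideal X.carrier) (v : κ → X.carrier) :
    MvPolynomial (Option κ × G) k →ₐ[k] DualNumber (X.carrier ⧸ J) :=
  aeval fun w =>
    w.1.elim (if w.2 = 1 then ε else 0) fun i => inl (Ideal.Quotient.mk J (X.action w.2 (v i)))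

theorem fst_dualEval (J : Ideal X.carrier) (v : κ → X.carrier) (q : MvPolynomial (Option κ × G) k) :
    (X.dualEval J v q).fst = Ideal.Quotient.mk J (X.orbitEval (Option.elim · 0 v) q) := by
  suffices (fstHom k _ _).comp (X.dualEval J v) = (Ideal.Quotient.mkₐ k J).comp (X.orbitEval _) from
    by simpa using DFunLike.congr_fun this q
  refine algHom_ext fun ⟨o, g⟩ => ?_
  cases o
  · simp [dualEval, orbitEval, apply_ite]
  · simp [dualEval, orbitEval]

theorem dualEval_orbitMonomialSum [Fintype G] [Fintype κ] (J : Ideal X.carrier)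
    (v : κ → X.carrier) :
    X.dualEval J v (orbitMonomialSum k G κ) = inr (Ideal.Quotient.mk J (∏ i, v i)) := by
  simp only [dualEval, orbitMonomialSum, map_sum, map_mul, map_prod, aeval_X, Option.elim,
    mul_ite, mul_zero]
  rw [Fintype.sum_eq_single 1 fun g hg => if_neg hg, if_pos rfl, map_one]
  rw [← algebraMap_eq_inl, ← map_prod, algebraMap_eq_inl, DualNumber.eps, inl_mul_inr, smul_eq_mul,
    mul_one]
  simp only [AlgEquiv.one_apply]

theorem orbitEval_mem_span_invariants {m : Ideal X.carrier}
    (hm : ∀ g : G, ∀ a ∈ m, X.action g a ∈ m) {v : κ → X.carrier} (hv : ∀ i, v i ∈ m)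
    {q : MvPolynomial (κ × G) k} {d : ℕ} (hq : q.IsHomogeneous d) (hd : d ≠ 0)
    (hinv : ∀ g, translationAction k G κ g q = q) :
    X.orbitEval v q ∈ Ideal.span {a | a ∈ m ∧ ∀ g : G, X.action g a = a} :=
  Ideal.subset_span ⟨hq.aeval_mem hd fun _ => hm _ _ (hv _),
    fun g => by rw [← orbitEval_translationAction, hinv]⟩

open GradedRing in
attribute [local instance] MvPolynomial.gradedAlgebra in
theorem prod_mem_span_invariants [Fintype G] {m : Ideal X.carrier}
    (hm : ∀ g : G, ∀ a ∈ m, X.action g a ∈ m) {n : ℕ}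
    (hgen : ∀ q : MvPolynomial (Option (Fin n) × G) k, (∀ g, translationAction k G _ g q = q) →
      q ∈ Subring.closure {s | (∀ g, translationAction k G _ g s = s) ∧ ∃ d ≤ n, s.IsHomogeneous d})
    {v : Fin n → X.carrier} (hv : ∀ i, v i ∈ m) :
    ∏ i, v i ∈ Ideal.span {a | a ∈ m ∧ ∀ g : G, X.action g a = a} := by
  set J := Ideal.span {a | a ∈ m ∧ ∀ g : G, X.action g a = a}
  have hI := ker_fstHom_mul_self (X.carrier ⧸ J) (X.carrier ⧸ J)
  have hv' : ∀ o, Option.elim o 0 v ∈ m := by rintro (_ | i); exacts [m.zero_mem, hv i]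
  have htrunc : {s | (∀ g, translationAction k G _ g s = s) ∧ ∃ d ≤ n, s.IsHomogeneous d} ⊆
      (sqZeroTruncation (homogeneousSubmodule _ k) (X.dualEval J v).toRingHom hI n :
        Set (MvPolynomial (Option (Fin n) × G) k)) := by
    rintro s ⟨hsinv, d, hdn, hs⟩
    refine mem_sqZeroTruncation_of_mem hI hs hdn fun hd => ?_
    rw [RingHom.mem_ker, fstHom_apply, AlgHom.toRingHom_eq_coe, RingHom.coe_coe, fst_dualEval,
      Ideal.Quotient.eq_zero_iff_mem]
    exact X.orbitEval_mem_span_invariants hm hv' hs hd hsinv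
  have hW := (Subring.closure_le.2 htrunc
    (hgen _ (translationAction_orbitMonomialSum k G (Fin n)))).2 (n + 1) n.lt_succ_self
  rw [proj_of_mem _ (isHomogeneous_orbitMonomialSum k G (Fin n)), if_pos (by simp)] at hW
  rw [← Ideal.Quotient.eq_zero_iff_mem, map_prod]
  simpa [dualEval_orbitMonomialSum] using congrArg snd hW

end AlgebraWithAction

open GradedAlgebraWithAction in
theorem AlgebraWithAction.etaOf_le_betaRing {k G : Type} [CommRing k] [Group G] [Fintype G]
    (X : AlgebraWithAction k G) {m : Ideal X.carrier} (hm : ∀ g : G, ∀ a ∈ m, X.action g a ∈ m) :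
    etaOf X m ≤ betaRing k G := by
  induction h : betaRing k G using ENat.recTopCoe with
  | top => exact le_top
  | coe n =>
    have hgen : (translationPolynomial k G (Option (Fin n))).betaInv ≤ n :=
      h ▸ le_iSup₂_of_le _ (translationPolynomial_betaTop_le_one k G _) le_rfl
    refine (etaOf_le_natCast_iff X m n).2 ?_
    rw [Submodule.pow_eq_span_pow_set, Submodule.span_le]
    intro a ha
    obtain ⟨v, rfl⟩ := Set.mem_pow.1 ha
    rw [List.prod_ofFn]
    exact X.prod_mem_span_invariants hm (fun q hq => (beta_le_natCast_iff _ _ n).1 hgen hq)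
      fun i => (v i).2

/-- For every finite group `G` and commutative ring `k` with `|G|`
a unit of `k` one has `η_k(G) = β_k(G)`. -/
theorem etaRing_eq_betaRing (k G : Type) [CommRing k] [Group G] [Finite G]
    (hunit : IsUnit ((Nat.card G : k))) :
    etaRing k G = betaRing k G := by
  have := Fintype.ofFinite G
  have : Invertible (Fintype.card G : k) := (Nat.card_eq_fintype_card (α := G) ▸ hunit).invertible
  exact le_antisymm (iSup₂_le fun X m => iSup_le fun hm => X.etaOf_le_betaRing hm)
    (iSup₂_le fun X hX => X.betaInv_le_etaRing hX)
end

section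
/- Let G be a finite group and φ : k → K a homomorphism of commutative rings. Then β_k(G) ≥ β_K(G). If moreover φ is faithfully flat, then β_k(G) = β_K(G). -/
/-!
Restricting scalars along `k → K` keeps the carrier, the grading and the invariant ring, so it
preserves both `β(A)` and `β(A^G)`; this gives `β_K(G) ≤ β_k(G)`. Conversely, base change
`A ↦ K ⊗[k] A` does not increase `β(A)`. If `K` is flat over `k` and `G` is finite, the invariants
of degree `d` in `K ⊗[k] A` form `K ⊗[k] (A_d ∩ A^G)`, as the invariants are a finite intersection
of kernels. Hence if `(K ⊗[k] A)^G` is generated in degrees `≤ n`, every `1 ⊗ a` with `a ∈ A^G`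
lies in `K ⊗[k] S_n`, where `S_n ⊆ A` is generated by the invariants of degree `≤ n`, and
faithful flatness descends this to `a ∈ S_n`.
-/

open TensorProduct

theorem beta_le_beta {A A' : Type*} [CommRing A] [CommRing A']
    {𝒜 : ℕ → Set A} {B : Subring A} {𝒜' : ℕ → Set A'} {B' : Subring A'}
    (h : ∀ n : ℕ, B' ≤ Subring.closure {a | a ∈ B' ∧ ∃ d ≤ n, a ∈ 𝒜' d} →
      B ≤ Subring.closure {a | a ∈ B ∧ ∃ d ≤ n, a ∈ 𝒜 d}) :
    beta 𝒜 B ≤ beta 𝒜' B' :=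
  sInf_le_sInf (Set.image_mono h)

theorem betaRing_le_betaRing {k K G : Type} [CommRing k] [CommRing K] [Group G]
    (h : ∀ X : GradedAlgebraWithAction K G, X.betaTop ≤ 1 →
      ∃ Y : GradedAlgebraWithAction k G, Y.betaTop ≤ 1 ∧ X.betaInv ≤ Y.betaInv) :
    betaRing K G ≤ betaRing k G :=
  iSup₂_le fun X hX =>
    let ⟨Y, hY, hXY⟩ := h X hX
    hXY.trans (le_iSup₂ (f := fun Y (_ : Y.betaTop ≤ 1) => Y.betaInv) Y hY)

section BaseChange

variable {k K M N : Type*} [CommRing k] [CommRing K] [Algebra k K]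
  [AddCommGroup M] [Module k M] [AddCommGroup N] [Module k N]

theorem Submodule.baseChange_map (f : M →ₗ[k] N) (p : Submodule k M) :
    (p.map f).baseChange K = (p.baseChange K).map (f.baseChange K) := by
  simp only [Submodule.baseChange_eq_span, Submodule.map_span, Submodule.map_coe,
    Set.image_image]
  refine congrArg (Submodule.span K) (Set.image_congr fun m _ => ?_)
  simp

theorem LinearMap.ker_baseChange [Module.Flat k K] (f : M →ₗ[k] N) :
    LinearMap.ker (f.baseChange K) = (LinearMap.ker f).baseChange K :=
  Module.Flat.ker_lTensor_eq K K f

theorem Submodule.mem_baseChange_inf_iInf_ker [Module.Flat k K] {ι : Type*} [Finite ι]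
    (f : ι → M →ₗ[k] N) {p : Submodule k M} {x : K ⊗[k] M} (hx : x ∈ p.baseChange K)
    (hf : ∀ i, (f i).baseChange K x = 0) :
    x ∈ (p ⊓ ⨅ i, LinearMap.ker (f i)).baseChange K := by
  classical
  cases nonempty_fintype ι
  obtain ⟨y, rfl⟩ := hx
  let Λ := LinearMap.pi f ∘ₗ p.subtype
  have hcomp (z : K ⊗[k] p) (i : ι) : TensorProduct.piRight k K K (fun _ => N)
      (Λ.baseChange K z) i = (f i).baseChange K (p.subtype.baseChange K z) := by
    induction z using TensorProduct.induction_on with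
    | zero => simp
    | tmul c z => rfl
    | add z z' hz hz' => simp only [map_add, Pi.add_apply, hz, hz']
  have hΛ : Λ.baseChange K y = 0 :=
    (TensorProduct.piRight k K K fun _ => N).injective <| funext fun i => by
      rw [hcomp, hf, map_zero, Pi.zero_apply]
  rw [← LinearMap.mem_ker, LinearMap.ker_baseChange] at hΛ
  have hmem := Submodule.mem_map_of_mem (f := p.subtype.baseChange K) hΛ
  rw [← Submodule.baseChange_map] at hmem
  refine Submodule.baseChange_mono K ?_ hmem
  rintro - ⟨z, hz, rfl⟩
  exact ⟨z.2, Submodule.mem_iInf _ |>.mpr fun i => congr_fun hz i⟩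

theorem Submodule.mem_of_one_tmul_mem_baseChange [Module.FaithfullyFlat k K]
    {p : Submodule k M} {m : M} (h : (1 : K) ⊗ₜ[k] m ∈ p.baseChange K) : m ∈ p := by
  have hspan : (Submodule.span k {m}).baseChange K ≤ p.baseChange K := by
    rwa [Submodule.baseChange_span, Set.image_singleton, Submodule.span_le,
      Set.singleton_subset_iff]
  exact Submodule.baseChange_le_iff.mp hspan (Submodule.mem_span_singleton_self m)

end BaseChange

noncomputable def AlgEquiv.baseChangeHom (k K A : Type*) [CommRing k] [CommRing K] [Algebra k K]
    [Ring A] [Algebra k A] : (A ≃ₐ[k] A) →* (K ⊗[k] A ≃ₐ[K] K ⊗[k] A) where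
  toFun e := Algebra.TensorProduct.congr AlgEquiv.refl e
  map_one' := Algebra.TensorProduct.congr_refl
  map_mul' e f := Algebra.TensorProduct.congr_trans AlgEquiv.refl AlgEquiv.refl f e

namespace GradedAlgebraWithAction

variable {k K G : Type} [CommRing k] [CommRing K] [Algebra k K] [Group G]

noncomputable def restrictScalars (X : GradedAlgebraWithAction K G) :
    GradedAlgebraWithAction k G :=
  letI : Algebra k X.carrier := ((algebraMap K X.carrier).comp (algebraMap k K)).toAlgebra
  haveI : IsScalarTower k K X.carrier := IsScalarTower.of_algebraMap_eq fun _ => rfl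
  { carrier := X.carrier
    grading d := (X.grading d).restrictScalars k
    graded := { X.graded with }
    action := (AlgEquiv.restrictScalarsHom k).comp X.action
    degPres := X.degPres }

attribute [local instance] GradedAlgebraWithAction.graded

variable (K) in
noncomputable def baseChange (X : GradedAlgebraWithAction k G) : GradedAlgebraWithAction K G where
  carrier := K ⊗[k] X.carrier
  grading d := (X.grading d).baseChange K
  graded := GradedAlgebra.baseChange X.grading
  action := (AlgEquiv.baseChangeHom k K X.carrier).comp X.action
  degPres g d x hx := by
    have hmap : (X.grading d).map (X.action g).toLinearMap ≤ X.grading d :=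
      Submodule.map_le_iff_le_comap.mpr (X.degPres g d)
    have hgx := Submodule.mem_map_of_mem (f := (X.action g).toLinearMap.baseChange K) hx
    rw [← Submodule.baseChange_map] at hgx
    exact Submodule.baseChange_mono K hmap hgx

variable (K) in
theorem betaTop_baseChange_le (X : GradedAlgebraWithAction k G) :
    (X.baseChange K).betaTop ≤ X.betaTop := by
  refine beta_le_beta fun n hX => ?_
  let S := Subring.closure {b | b ∈ (⊤ : Subring (X.baseChange K).carrier) ∧
    ∃ d ≤ n, b ∈ ((X.baseChange K).grading d : Set (X.baseChange K).carrier)}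
  have hK (c : K) : c ⊗ₜ[k] (1 : X.carrier) ∈ S :=
    Subring.subset_closure ⟨trivial, 0, n.zero_le,
      Submodule.tmul_mem_baseChange_of_mem c (SetLike.one_mem_graded X.grading)⟩
  have hA (a : X.carrier) : (1 : K) ⊗ₜ[k] a ∈ S := by
    refine (Subring.closure_le (t := S.comap Algebra.TensorProduct.includeRight.toRingHom)).2
      ?_ (hX trivial)
    rintro b ⟨-, d, hd, hb⟩
    exact Subring.subset_closure ⟨trivial, d, hd, Submodule.tmul_mem_baseChange_of_mem 1 hb⟩
  rintro x -
  induction x using TensorProduct.induction_on with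
  | zero => exact zero_mem S
  | tmul c a =>
    rw [← mul_one c, ← one_mul a, ← Algebra.TensorProduct.tmul_mul_tmul]
    exact mul_mem (hK c) (hA a)
  | add x y hx hy => exact add_mem hx hy

variable (X : GradedAlgebraWithAction k G)

noncomputable def invAdjoin (n : ℕ) : Subalgebra k X.carrier :=
  Algebra.adjoin k {a | a ∈ X.inv ∧ ∃ d ≤ n, a ∈ (X.grading d : Set X.carrier)}

theorem invAdjoin_le_closure (n : ℕ) : (X.invAdjoin n).toSubring ≤
    Subring.closure {a | a ∈ X.inv ∧ ∃ d ≤ n, a ∈ (X.grading d : Set X.carrier)} := by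
  rw [invAdjoin, Algebra.adjoin_eq_ring_closure]
  refine Subring.closure_le.2 (Set.union_subset ?_ Subring.subset_closure)
  rintro - ⟨c, rfl⟩
  exact Subring.subset_closure
    ⟨fun g => (X.action g).commutes c, 0, n.zero_le, SetLike.algebraMap_mem_graded X.grading c⟩

theorem mem_baseChange_invAdjoin [Finite G] [Module.Flat k K] {n d : ℕ} (hd : d ≤ n)
    {x : K ⊗[k] X.carrier} (hx : x ∈ (X.baseChange K).inv)
    (hxd : x ∈ (X.baseChange K).grading d) :
    x ∈ (Subalgebra.toSubmodule (X.invAdjoin n)).baseChange K := by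
  have hfix := Submodule.mem_baseChange_inf_iInf_ker
    (fun g => (X.action g).toLinearMap - LinearMap.id) hxd fun g => by
      rw [LinearMap.baseChange_sub, LinearMap.sub_apply, LinearMap.baseChange_id,
        LinearMap.id_apply, sub_eq_zero]
      exact hx g
  refine Submodule.baseChange_mono K ?_ hfix
  rintro a ⟨had, hker⟩
  refine Algebra.subset_adjoin ⟨fun g => ?_, d, hd, had⟩
  exact sub_eq_zero.mp (LinearMap.mem_ker.mp (Submodule.mem_iInf _ |>.mp hker g))

theorem betaInv_le_betaInv_baseChange [Finite G] [Module.FaithfullyFlat k K] :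
    X.betaInv ≤ (X.baseChange K).betaInv := by
  refine beta_le_beta fun n hbc a ha => ?_
  have hcl : Subring.closure {x | x ∈ (X.baseChange K).inv ∧
      ∃ d ≤ n, x ∈ ((X.baseChange K).grading d : Set (X.baseChange K).carrier)} ≤
      ((X.invAdjoin n).baseChange K).toSubring :=
    Subring.closure_le.2 fun x ⟨hx, d, hd, hxd⟩ => X.mem_baseChange_invAdjoin hd hx hxd
  have h1 : (1 : K) ⊗ₜ[k] a ∈ (Subalgebra.toSubmodule (X.invAdjoin n)).baseChange K :=
    hcl (hbc fun g => congrArg ((1 : K) ⊗ₜ[k] ·) (ha g))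
  exact X.invAdjoin_le_closure n (Submodule.mem_of_one_tmul_mem_baseChange h1)

end GradedAlgebraWithAction

/-- Let `G` be a finite group and `k → K` a homomorphism of
commutative rings (encoded as an algebra structure of `K` over `k`; every `K`-algebra
is regarded as a `k`-algebra via this map).  Then `β_k(G) ≥ β_K(G)`, with equality if
the map is faithfully flat. -/
theorem betaRing_le_of_ringHom (k K G : Type) [CommRing k] [CommRing K] [Algebra k K]
    [Group G] [Finite G] :
    betaRing K G ≤ betaRing k G ∧
      (Module.FaithfullyFlat k K → betaRing K G = betaRing k G) := by
  have hres : betaRing K G ≤ betaRing k G :=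
    betaRing_le_betaRing fun X hX => ⟨X.restrictScalars, hX, le_rfl⟩
  refine ⟨hres, fun _ => hres.antisymm (betaRing_le_betaRing fun X hX => ?_)⟩
  exact ⟨X.baseChange K, (X.betaTop_baseChange_le K).trans hX, X.betaInv_le_betaInv_baseChange⟩
end
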